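/- arXiv:2401.04396 — 2 statements merged into one kernel-verified Lean document; each statement's English description precedes it below -/
import Mathlib

section
/- For every point s ∈ ℝ² and every ε with 0 < ε < 1, the cutoff function χ_{ε,s} is differentiable at every x in the open annulus {x : ε² < ‖x − s‖ < ε}, and at every such x its Fréchet derivative satisfies the uniform bound ‖Dχ_{ε,s}(x)‖ ≤ 4 / (e · (ε − ε²)), where e = exp(1). -/
/-- The plane ℝ² with the Euclidean norm. -/
abbrev E2 : Type := EuclideanSpace ℝ (Fin 2)

/-- The truncating (cutoff) function `χ_{ε,s}` of the paper. -/
noncomputable def chiCut (s : E2) (ε : ℝ) (x : E2) : ℝ :=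
  if ‖x - s‖ ≤ ε ^ 2 then 0
  else if ‖x - s‖ < ε then Real.exp ((ε - ‖x - s‖) / (ε ^ 2 - ‖x - s‖))
  else 1

/-!
On the annulus, `χ_{ε,s} = g ∘ ‖· - s‖` with `g r = exp ((ε - r) / (ε² - r))`, and the norm is
1-Lipschitz, so `‖Dχ‖ ≤ |g'|`. Writing `u = (ε - ε²) / (r - ε²) > 0` one finds
`g' r = e · u² e^{-u} / (ε - ε²)`, and `u² e^{-u} ≤ 4 e^{-2}` (the maximum, at `u = 2`).
-/

open Real Filter Topology

lemma sq_mul_exp_neg_le {u : ℝ} (hu : 0 ≤ u) : u ^ 2 * exp (-u) ≤ 4 * exp (-2) := by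
  calc u ^ 2 * exp (-u) = 4 * (u / 2 * exp (-(u / 2))) ^ 2 := by
        rw [mul_pow, ← exp_nat_mul]; ring_nf
    _ ≤ 4 * exp (-1) ^ 2 := by gcongr; exact mul_exp_neg_le_exp_neg_one _
    _ = 4 * exp (-2) := by rw [← exp_nat_mul]; norm_num

noncomputable def cutoffProfile (b c r : ℝ) : ℝ := exp ((c - r) / (b - r))

lemma hasDerivAt_cutoffProfile {b r : ℝ} (c : ℝ) (hr : r ≠ b) :
    HasDerivAt (cutoffProfile b c) (cutoffProfile b c r * ((c - b) / (r - b) ^ 2)) r := by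
  have hden : b - r ≠ 0 := sub_ne_zero.mpr hr.symm
  have hquot : HasDerivAt (fun t => (c - t) / (b - t)) ((c - b) / (r - b) ^ 2) r := by
    refine (((hasDerivAt_id' r).const_sub c).div ((hasDerivAt_id' r).const_sub b) hden
      ).congr_deriv ?_
    ring
  exact hquot.exp

lemma abs_cutoffProfile_mul_le {b c r : ℝ} (hbc : b < c) (hbr : b < r) :
    |cutoffProfile b c r * ((c - b) / (r - b) ^ 2)| ≤ 4 / (exp 1 * (c - b)) := by
  have hcb : 0 < c - b := sub_pos.2 hbc
  have hrb : r - b ≠ 0 := (sub_pos.2 hbr).ne'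
  have hbr' : b - r ≠ 0 := (sub_neg.2 hbr).ne
  have hprofile : 0 < cutoffProfile b c r := exp_pos _
  rw [abs_of_nonneg (mul_nonneg hprofile.le (div_nonneg hcb.le (sq_nonneg _)))]
  set u := (c - b) / (r - b) with hu_def
  have hu : 0 ≤ u := by positivity
  have profile_eq : cutoffProfile b c r = exp 1 * exp (-u) := by
    rw [cutoffProfile, ← exp_add, hu_def]
    congr 1
    field_simp
    ring
  have exp_neg_two : exp (-2) = (exp 1 * exp 1)⁻¹ := by rw [← exp_add, ← exp_neg]; norm_num
  calc cutoffProfile b c r * ((c - b) / (r - b) ^ 2)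
      = exp 1 * (u ^ 2 * exp (-u)) / (c - b) := by rw [profile_eq, hu_def]; field_simp
    _ ≤ exp 1 * (4 * exp (-2)) / (c - b) := by
        gcongr exp 1 * ?_ / _
        exact sq_mul_exp_neg_le hu
    _ = 4 / (exp 1 * (c - b)) := by rw [exp_neg_two]; field_simp

lemma exists_hasFDerivAt_comp_norm_sub_le {E : Type*} [NormedAddCommGroup E]
    [InnerProductSpace ℝ E] {φ : ℝ → ℝ} {d : ℝ} {s x : E} (hx : x ≠ s)
    (hφ : HasDerivAt φ d ‖x - s‖) :
    ∃ L : E →L[ℝ] ℝ, HasFDerivAt (fun y => φ ‖y - s‖) L x ∧ ‖L‖ ≤ |d| := by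
  have hdist : LipschitzWith 1 fun y : E => ‖y - s‖ :=
    LipschitzWith.of_dist_le_mul fun y z => by
      simpa [dist_eq_norm] using abs_norm_sub_norm_le (y - s) (z - s)
  have hnorm : DifferentiableAt ℝ (fun y : E => ‖y - s‖) x :=
    (differentiableAt_id.sub_const s).norm ℝ (sub_ne_zero.mpr hx)
  refine ⟨d • fderiv ℝ (fun y : E => ‖y - s‖) x, hφ.comp_hasFDerivAt x hnorm.hasFDerivAt, ?_⟩
  calc ‖d • fderiv ℝ (fun y : E => ‖y - s‖) x‖ ≤ |d| * 1 := by
        rw [norm_smul, Real.norm_eq_abs]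
        gcongr
        simpa using norm_fderiv_le_of_lipschitz ℝ hdist
    _ = |d| := mul_one _

lemma chiCut_eventuallyEq_cutoffProfile {s x : E2} {ε : ℝ} (h1 : ε ^ 2 < ‖x - s‖)
    (h2 : ‖x - s‖ < ε) : chiCut s ε =ᶠ[𝓝 x] fun y => cutoffProfile (ε ^ 2) ε ‖y - s‖ := by
  have hcont : Continuous fun y : E2 => ‖y - s‖ := by fun_prop
  filter_upwards [(isOpen_Ioo.preimage hcont).mem_nhds ⟨h1, h2⟩] with y hy
  simp [chiCut, cutoffProfile, not_le.mpr hy.1, hy.2]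

theorem chiCut_fderiv_bound_general (s : E2) (ε : ℝ) (x : E2)
    (h1 : ε ^ 2 < ‖x - s‖) (h2 : ‖x - s‖ < ε) :
    DifferentiableAt ℝ (chiCut s ε) x ∧
    ‖fderiv ℝ (chiCut s ε) x‖ ≤ 4 / (Real.exp 1 * (ε - ε ^ 2)) := by
  have hx : x ≠ s := by
    rw [← sub_ne_zero, ← norm_pos_iff]
    exact (sq_nonneg ε).trans_lt h1
  obtain ⟨L, hL, hL_le⟩ :=
    exists_hasFDerivAt_comp_norm_sub_le hx (hasDerivAt_cutoffProfile ε h1.ne')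
  have hχ := hL.congr_of_eventuallyEq (chiCut_eventuallyEq_cutoffProfile h1 h2)
  refine ⟨hχ.differentiableAt, ?_⟩
  rw [hχ.fderiv]
  exact hL_le.trans (abs_cutoffProfile_mul_le (h1.trans h2) h1)

/-- on the open annulus `ε² < ‖x - s‖ < ε` the cutoff `χ_{ε,s}` is
differentiable and its Fréchet derivative is bounded by `4 / (e · (ε - ε²))`. -/
theorem chiCut_fderiv_bound (s : E2) (ε : ℝ) (hε0 : 0 < ε) (hε1 : ε < 1) (x : E2)
    (h1 : ε ^ 2 < ‖x - s‖) (h2 : ‖x - s‖ < ε) :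
    DifferentiableAt ℝ (chiCut s ε) x ∧
    ‖fderiv ℝ (chiCut s ε) x‖ ≤ 4 / (Real.exp 1 * (ε - ε ^ 2)) :=
  chiCut_fderiv_bound_general s ε x h1 h2
end

section
/- Let s ∈ ℝ², γ > 0, M ≥ 0, and let G : ℝ² → ℝ satisfy the domination condition |G(x)| ≤ M · ‖x − s‖^{1+γ} for all x with ‖x − s‖ < 1. Then for every ε with 0 < ε ≤ 1/2 and every x in the open annulus ε² < ‖x − s‖ < ε, one has |G(x)| · ‖Dχ_{ε,s}(x)‖ ≤ (8M/e) · ε^{γ}, where e = exp(1). -/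
/-!
On the annulus `χ_{ε,s} = φ(‖x - s‖)` with `φ(r) = exp((ε - r)/(ε² - r))`, and since the distance
to `s` is `1`-Lipschitz, `‖Dχ‖ ≤ φ'(r)`. Writing `v = (ε - ε²)/(r - ε²)`, one has
`φ'(r) = v² e^{1-v}/(ε - ε²) ≤ 4/(e (ε - ε²))`, because `v² e^{-v} ≤ 4 e^{-2}`.
Together with `|G(x)| ≤ M ε^{1+γ}` and `ε/(ε - ε²) ≤ 2` for `ε ≤ 1/2` this gives `8 M ε^γ / e`.
-/

open Real Filter Topology

theorem Real.pow_le_pow_mul_exp_sub {v : ℝ} (hv : 0 ≤ v) (n : ℕ) :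
    v ^ n ≤ (n : ℝ) ^ n * exp (v - n) := by
  rcases Nat.eq_zero_or_pos n with rfl | hn
  · simpa using one_le_exp hv
  have hn' : (0 : ℝ) < n := Nat.cast_pos.mpr hn
  have hlin : v / n ≤ exp (v / n - 1) := by linarith [add_one_le_exp (v / n - 1)]
  calc v ^ n = (n : ℝ) ^ n * (v / n) ^ n := by rw [← mul_pow, mul_div_cancel₀ _ hn'.ne']
    _ ≤ (n : ℝ) ^ n * exp (v / n - 1) ^ n := by gcongr
    _ = (n : ℝ) ^ n * exp (v - n) := by
      rw [← exp_nat_mul, mul_sub, mul_div_cancel₀ _ hn'.ne', mul_one]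

theorem hasDerivAt_exp_div_sub {a b r : ℝ} (hr : b ≠ r) :
    HasDerivAt (fun u => exp ((a - u) / (b - u)))
      (exp ((a - r) / (b - r)) * ((a - b) / (b - r) ^ 2)) r := by
  have hnum : HasDerivAt (fun u => a - u) (-1) r := by
    simpa using (hasDerivAt_id r).const_sub a
  have hden : HasDerivAt (fun u => b - u) (-1) r := by
    simpa using (hasDerivAt_id r).const_sub b
  have hquot : HasDerivAt (fun u => (a - u) / (b - u))
      ((-1 * (b - r) - (a - r) * -1) / (b - r) ^ 2) r :=
    hnum.div hden (sub_ne_zero.mpr hr)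
  exact hquot.exp.congr_deriv (by ring)

theorem exp_div_sub_mul_div_sq_le {a b r : ℝ} (hab : b < a) (hbr : b < r) :
    exp ((a - r) / (b - r)) * ((a - b) / (b - r) ^ 2) ≤ 4 / (exp 1 * (a - b)) := by
  set v := (a - b) / (r - b)
  have hv : 0 ≤ v := by positivity
  have hrb : r - b ≠ 0 := (sub_pos.mpr hbr).ne'
  have hbr' : b - r ≠ 0 := (sub_neg.mpr hbr).ne
  have hexp : (a - r) / (b - r) = 1 - v := by
    simp only [v]; field_simp; ring
  have hfrac : (a - b) / (b - r) ^ 2 = v ^ 2 / (a - b) := by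
    simp only [v]; field_simp; ring
  have hsq : v ^ 2 ≤ 4 * exp (v - 2) := by exact_mod_cast pow_le_pow_mul_exp_sub hv 2
  rw [hexp, hfrac]
  calc exp (1 - v) * (v ^ 2 / (a - b)) ≤ exp (1 - v) * (4 * exp (v - 2) / (a - b)) := by
        gcongr
    _ = 4 / (exp 1 * (a - b)) := by
      rw [mul_div_assoc', mul_left_comm, ← exp_add, show 1 - v + (v - 2) = -1 by ring, exp_neg]
      field_simp

theorem norm_fderiv_comp_norm_sub_le {E : Type*} [NormedAddCommGroup E] [InnerProductSpace ℝ E]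
    {f : ℝ → ℝ} {f' : ℝ} {s x : E} (hx : x ≠ s) (hf : HasDerivAt f f' ‖x - s‖) :
    ‖fderiv ℝ (fun y => f ‖y - s‖) x‖ ≤ |f'| := by
  have hdist : DifferentiableAt ℝ (fun y : E => ‖y - s‖) x :=
    (differentiableAt_id.sub_const s).norm ℝ (sub_ne_zero.mpr hx)
  have hlip : LipschitzWith 1 (fun y : E => ‖y - s‖) := by
    simpa [Function.comp_def] using
      lipschitzWith_one_norm.comp (IsometryEquiv.subRight s).isometry.lipschitz
  have hF : HasFDerivAt (fun y => f ‖y - s‖) (f' • fderiv ℝ (fun y : E => ‖y - s‖) x) x :=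
    hf.comp_hasFDerivAt x hdist.hasFDerivAt
  rw [hF.fderiv, norm_smul, Real.norm_eq_abs]
  simpa using mul_le_mul_of_nonneg_left (norm_fderiv_le_of_lipschitz ℝ hlip) (abs_nonneg f')

theorem chiCut_eventuallyEq {s x : E2} {ε : ℝ} (h1 : ε ^ 2 < ‖x - s‖) (h2 : ‖x - s‖ < ε) :
    chiCut s ε =ᶠ[𝓝 x] fun y => exp ((ε - ‖y - s‖) / (ε ^ 2 - ‖y - s‖)) := by
  have hcont : Continuous fun y : E2 => ‖y - s‖ := by fun_prop
  filter_upwards [(isOpen_lt continuous_const hcont).mem_nhds h1,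
    (isOpen_lt hcont continuous_const).mem_nhds h2] with y hy1 hy2
  simp only [chiCut, if_neg (not_le.mpr hy1), if_pos hy2]

theorem norm_fderiv_chiCut_le {s x : E2} {ε : ℝ} (h1 : ε ^ 2 < ‖x - s‖) (h2 : ‖x - s‖ < ε) :
    ‖fderiv ℝ (chiCut s ε) x‖ ≤ 4 / (exp 1 * (ε - ε ^ 2)) := by
  have hx : x ≠ s := by
    rintro rfl
    simp only [sub_self, norm_zero] at h1 h2
    nlinarith
  rw [(chiCut_eventuallyEq h1 h2).fderiv_eq]
  refine (norm_fderiv_comp_norm_sub_le hx (hasDerivAt_exp_div_sub h1.ne)).trans ?_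
  have hε : ε ^ 2 < ε := h1.trans h2
  rw [abs_of_nonneg (by have := sub_pos.mpr hε; positivity)]
  exact exp_div_sub_mul_div_sq_le hε h1

/-- if `|G(x)| ≤ M ‖x - s‖^{1+γ}` near `s` (the paper's domination
condition (1.10)), then for `0 < ε ≤ 1/2` and `x` in the annulus `ε² < ‖x - s‖ < ε`
one has `|G(x)| · ‖Dχ_{ε,s}(x)‖ ≤ (8M/e) · ε^γ`. -/
theorem domination_times_fderiv_bound (s : E2) (γ M : ℝ) (hγ : 0 < γ) (hM : 0 ≤ M)
    (G : E2 → ℝ) (hG : ∀ x : E2, ‖x - s‖ < 1 → |G x| ≤ M * ‖x - s‖ ^ (1 + γ))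
    (ε : ℝ) (hε0 : 0 < ε) (hε : ε ≤ 1 / 2) (x : E2)
    (h1 : ε ^ 2 < ‖x - s‖) (h2 : ‖x - s‖ < ε) :
    |G x| * ‖fderiv ℝ (chiCut s ε) x‖ ≤ (8 * M / Real.exp 1) * ε ^ γ := by
  have hGx : |G x| ≤ M * ε ^ (1 + γ) := by
    refine (hG x (by linarith)).trans ?_
    gcongr
  have hgap : ε ≤ 2 * (ε - ε ^ 2) := by nlinarith
  calc |G x| * ‖fderiv ℝ (chiCut s ε) x‖ ≤ M * ε ^ (1 + γ) * (4 / (exp 1 * (ε - ε ^ 2))) :=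
        mul_le_mul hGx (norm_fderiv_chiCut_le h1 h2) (norm_nonneg _) (by positivity)
    _ = 4 * M / exp 1 * ε ^ γ * (ε / (ε - ε ^ 2)) := by
        rw [rpow_add hε0, rpow_one, ← div_div]; ring
    _ ≤ 4 * M / exp 1 * ε ^ γ * 2 := by
        gcongr
        rw [div_le_iff₀ (by nlinarith)]; exact hgap
    _ = 8 * M / exp 1 * ε ^ γ := by ring
end
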